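/- arXiv:1109.3641 — 6 statements merged into one kernel-verified Lean document; each statement's English description precedes it below -/
import Mathlib

section
/- An ascent sequence avoids the pattern 10 if and only if it is weakly increasing, and the number of ascent sequences of length n avoiding 10 is 2^{n-1}. -/
/-!
Avoiding 10 is being weakly increasing. In a weakly increasing ascent sequence every ascent
raises the value by at least one, while the ascent bound lets no letter exceed the number of
earlier ascents by more than one; so the number of ascents equals the last letter, and such a
sequence extends in exactly two ways, by repeating its last letter or by increasing it by one.
Starting from `[0]`, their number therefore doubles with each letter.
-/

/-- Number of ascents (adjacent strict rises) in a list of naturals. -/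
def ascList (l : List ℕ) : ℕ :=
  (l.zip l.tail).countP (fun p => decide (p.1 < p.2))

/-- `l` is an ascent sequence: nonempty, starts with 0, and each later letter is at most
one more than the number of ascents in the preceding prefix. -/
def IsAscSeq (l : List ℕ) : Prop :=
  l ≠ [] ∧ l.getD 0 0 = 0 ∧
    ∀ i, 0 < i → i < l.length → l.getD i 0 ≤ ascList (l.take i) + 1

/-- A sequence contains the pattern 10. -/
def Contains10 (l : List ℕ) : Prop :=
  ∃ i j, i < j ∧ j < l.length ∧ l.getD j 0 < l.getD i 0

theorem not_contains10_iff_pairwise (l : List ℕ) : ¬ Contains10 l ↔ l.Pairwise (· ≤ ·) := by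
  simp only [Contains10, List.pairwise_iff_getElem, not_exists, not_and, not_lt]
  refine ⟨fun h i j hi hj hij => ?_, fun h i j hij hj => ?_⟩
  · simpa [List.getElem?_eq_getElem hi, List.getElem?_eq_getElem hj] using h i j hij hj
  · simpa [List.getElem?_eq_getElem hj, List.getElem?_eq_getElem (hij.trans hj)] using
      h i j (hij.trans hj) hj hij

theorem ascList_cons_cons (a b : ℕ) (l : List ℕ) :
    ascList (a :: b :: l) = ascList (b :: l) + if a < b then 1 else 0 := by
  simp [ascList, List.countP_cons]

theorem ascList_append_pair (l : List ℕ) (y x : ℕ) :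
    ascList (l ++ [y, x]) = ascList (l ++ [y]) + if y < x then 1 else 0 := by
  induction l with
  | nil => simp [ascList]
  | cons a l ih =>
    cases l with
    | nil => simp [ascList, List.countP_cons, add_comm]
    | cons b l =>
      simp only [List.cons_append] at ih ⊢
      rw [ascList_cons_cons, ascList_cons_cons a, ih]
      omega

theorem isAscSeq_singleton {x : ℕ} : IsAscSeq [x] ↔ x = 0 := by
  simp +contextual [IsAscSeq]

theorem isAscSeq_append_singleton {l : List ℕ} (hl : l ≠ []) (x : ℕ) :
    IsAscSeq (l ++ [x]) ↔ IsAscSeq l ∧ x ≤ ascList l + 1 := by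
  have hpos : 0 < l.length := List.length_pos_iff.mpr hl
  simp only [IsAscSeq, ne_eq, List.append_eq_nil_iff, hl, false_and, not_false_eq_true,
    true_and, List.getD_append _ _ _ _ hpos, List.length_append, List.length_singleton,
    Nat.lt_succ_iff_lt_or_eq]
  have hlast : (l ++ [x]).getD l.length 0 = x := by simp
  have hprefix : ∀ i < l.length, (l ++ [x]).getD i 0 = l.getD i 0 ∧
      (l ++ [x]).take i = l.take i := fun i hi =>
    ⟨List.getD_append _ _ _ _ hi, List.take_append_of_le_length hi.le⟩
  constructor
  · rintro ⟨h0, h⟩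
    refine ⟨⟨h0, fun i hi0 hi => ?_⟩, ?_⟩
    · rw [← (hprefix i hi).1, ← (hprefix i hi).2]
      exact h i hi0 (.inl hi)
    · simpa [hlast, List.take_length] using h _ hpos (.inr rfl)
  · rintro ⟨⟨h0, h⟩, hx⟩
    refine ⟨h0, fun i hi0 => ?_⟩
    rintro (hi | rfl)
    · rw [(hprefix i hi).1, (hprefix i hi).2]
      exact h i hi0 hi
    · simpa [hlast, List.take_length] using hx

theorem IsAscSeq.ascList_eq_getLastD {l : List ℕ} (h : IsAscSeq l) (hs : l.Pairwise (· ≤ ·)) :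
    ascList l = l.getLastD 0 := by
  induction l using List.reverseRecOn with
  | nil => rfl
  | append_singleton l x ih =>
    rcases List.eq_nil_or_concat' l with rfl | ⟨l, y, rfl⟩
    · simp [isAscSeq_singleton.mp h, ascList]
    · obtain ⟨hasc, hx⟩ := (isAscSeq_append_singleton (by simp) x).mp h
      obtain ⟨hsorted, -, hle⟩ := List.pairwise_append.mp hs
      have hy : ascList (l ++ [y]) = y := by simpa using ih hasc hsorted
      have hyx : y ≤ x := hle y (by simp) x (by simp)
      rw [List.getLastD_concat, List.append_assoc, List.singleton_append, ascList_append_pair, hy]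
      split <;> omega

theorem IsAscSeq.append_singleton_iff {l : List ℕ} (h : IsAscSeq l) (hs : l.Pairwise (· ≤ ·))
    (x : ℕ) : IsAscSeq (l ++ [x]) ∧ (l ++ [x]).Pairwise (· ≤ ·) ↔
      x = l.getLastD 0 ∨ x = l.getLastD 0 + 1 := by
  have hlast : l.getLastD 0 = l.getLast h.1 := by
    simp [List.getLastD_eq_getLast?, List.getLast?_eq_some_getLast h.1]
  rw [isAscSeq_append_singleton h.1, h.ascList_eq_getLastD hs, List.pairwise_append, hlast]
  simp only [h, hs, List.pairwise_singleton, List.mem_singleton, forall_eq, true_and]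
  constructor
  · rintro ⟨hx, hle⟩
    have := hle _ (List.getLast_mem h.1)
    omega
  · intro hx
    refine ⟨by omega, fun a ha => (hs.rel_getLast ha).trans (by omega)⟩

def sortedAscSeqs (n : ℕ) : Set (List ℕ) :=
  {l | l.length = n ∧ IsAscSeq l ∧ l.Pairwise (· ≤ ·)}

def appendStep (p : List ℕ × Bool) : List ℕ :=
  p.1 ++ [p.1.getLastD 0 + p.2.toNat]

theorem appendStep_injective : Function.Injective appendStep := by
  rintro ⟨l, b⟩ ⟨l', b'⟩ h
  obtain ⟨rfl, hb⟩ := List.append_inj' h rfl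
  cases b <;> cases b' <;> simp_all

theorem sortedAscSeqs_one : sortedAscSeqs 1 = {[0]} := by
  ext l
  simp only [sortedAscSeqs, Set.mem_ofPred_eq, List.length_eq_one_iff, Set.mem_singleton_iff]
  constructor
  · rintro ⟨⟨x, rfl⟩, h, -⟩
    rw [isAscSeq_singleton.mp h]
  · rintro rfl
    exact ⟨⟨0, rfl⟩, isAscSeq_singleton.mpr rfl, List.pairwise_singleton _ _⟩

theorem sortedAscSeqs_succ {n : ℕ} (hn : n ≠ 0) :
    sortedAscSeqs (n + 1) = appendStep '' (sortedAscSeqs n ×ˢ Set.univ) := by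
  ext l'
  simp only [sortedAscSeqs, Set.mem_ofPred_eq, Set.mem_image, Set.mem_prod, Set.mem_univ,
    and_true, Prod.exists, appendStep]
  constructor
  · rintro ⟨hlen, hasc, hs⟩
    obtain ⟨l, x, rfl⟩ := (List.eq_nil_or_concat' l').resolve_left (by rintro rfl; simp at hlen)
    have hlen' : l.length = n := by simpa using hlen
    have hl : l ≠ [] := by rintro rfl; exact hn hlen'.symm
    have hasc' := ((isAscSeq_append_singleton hl x).mp hasc).1
    have hs' := (List.pairwise_append.mp hs).1
    rcases (hasc'.append_singleton_iff hs' x).mp ⟨hasc, hs⟩ with rfl | rfl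
    · exact ⟨l, false, ⟨hlen', hasc', hs'⟩, by simp⟩
    · exact ⟨l, true, ⟨hlen', hasc', hs'⟩, by simp⟩
  · rintro ⟨l, b, ⟨hlen, hasc, hs⟩, rfl⟩
    refine ⟨by simp [hlen], (hasc.append_singleton_iff hs _).mpr ?_⟩
    cases b <;> simp

theorem ncard_sortedAscSeqs {n : ℕ} (hn : 1 ≤ n) : (sortedAscSeqs n).ncard = 2 ^ (n - 1) := by
  induction n, hn using Nat.le_induction with
  | base => simp [sortedAscSeqs_one]
  | succ n hn ih =>
    rw [sortedAscSeqs_succ (by omega), Set.ncard_image_of_injective _ appendStep_injective,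
      Set.ncard_prod, ih, Set.ncard_univ, Nat.card_eq_fintype_card, Fintype.card_bool,
      ← pow_succ, Nat.sub_add_cancel hn, Nat.add_sub_cancel]

/-- An ascent sequence avoids 10 iff it is weakly increasing, and there are `2^(n-1)`
ascent sequences of length `n` avoiding 10. -/
theorem stmt2 (n : ℕ) (hn : 1 ≤ n) :
    (∀ l : List ℕ, IsAscSeq l → (¬ Contains10 l ↔ l.Pairwise (· ≤ ·))) ∧
    {l : List ℕ | l.length = n ∧ IsAscSeq l ∧ ¬ Contains10 l}.ncard = 2 ^ (n - 1) := by
  refine ⟨fun l _ => not_contains10_iff_pairwise l, ?_⟩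
  simp only [not_contains10_iff_pairwise]
  exact ncard_sortedAscSeqs hn
end

section
/- The number of ascent sequences of length n avoiding the pattern 10 that have exactly k ascents is binomial(n-1, k). -/
/-!
A 10-avoiding sequence is weakly increasing, so for an ascent sequence induction gives
`x (i+1) ≤ asc (x 0 … x i) + 1 = x i + 1`: every step is `+0` or `+1`, and `x i` is the number of
ascents before position `i`. Hence the sequence is determined by its set of ascent positions, and
conversely every subset of the `n - 1` gaps arises, with as many ascents as elements.
-/

open Finset

def ascentSet (l : List ℕ) : Finset ℕ :=
  {i ∈ range (l.length - 1) | l.getD i 0 < l.getD (i + 1) 0}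

lemma ascList_eq_card_ascentSet (l : List ℕ) : ascList l = #(ascentSet l) := by
  have hzip : l.zip l.tail =
      (List.range (l.length - 1)).map (fun i => (l.getD i 0, l.getD (i + 1) 0)) := by
    apply List.ext_getElem
    · simp
    · intro i h _
      simp only [List.length_zip, List.length_tail] at h
      rw [List.getElem_zip, List.getElem_map, List.getElem_range, List.getElem_tail,
        List.getD_eq_getElem, List.getD_eq_getElem]
  rw [ascList, hzip, List.countP_map, ascentSet, ← Nat.count_eq_card_filter_range]
  rfl

lemma ascentSet_take (l : List ℕ) (m : ℕ) :
    ascentSet (l.take m) = {j ∈ range (m - 1) | j ∈ ascentSet l} := by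
  ext j
  simp only [ascentSet, mem_filter, mem_range, List.length_take]
  by_cases hjm : j + 1 < m
  · have hj : j < m := by omega
    simp only [List.getD_eq_getElem?_getD, List.getElem?_take, if_pos hj, if_pos hjm]
    omega
  · omega

lemma ascList_take (l : List ℕ) (m : ℕ) :
    ascList (l.take m) = Nat.count (· ∈ ascentSet l) (m - 1) := by
  rw [ascList_eq_card_ascentSet, ascentSet_take, Nat.count_eq_card_filter_range]

lemma getD_eq_count_ascentSet {l : List ℕ} (hl : IsAscSeq l) (h10 : ¬Contains10 l) {i : ℕ}
    (hi : i < l.length) : l.getD i 0 = Nat.count (· ∈ ascentSet l) i := by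
  induction i with
  | zero => simpa using hl.2.1
  | succ i ih =>
    have hstep := hl.2.2 (i + 1) i.succ_pos hi
    rw [ascList_take, Nat.add_sub_cancel, ← ih (by omega)] at hstep
    have hmono : l.getD i 0 ≤ l.getD (i + 1) 0 :=
      not_lt.mp fun h => h10 ⟨i, i + 1, i.lt_succ_self, hi, h⟩
    rw [Nat.count_succ, ← ih (by omega)]
    split_ifs with hasc <;> simp only [ascentSet, mem_filter, mem_range] at hasc <;> omega

def ofAscentSet (n : ℕ) (S : Finset ℕ) : List ℕ :=
  (List.range n).map (Nat.count (· ∈ S))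

lemma length_ofAscentSet (n : ℕ) (S : Finset ℕ) : (ofAscentSet n S).length = n := by
  simp [ofAscentSet]

lemma getD_ofAscentSet {n i : ℕ} (S : Finset ℕ) (hi : i < n) :
    (ofAscentSet n S).getD i 0 = Nat.count (· ∈ S) i := by
  simp [ofAscentSet, List.getD_eq_getElem?_getD, List.getElem?_range hi]

lemma take_ofAscentSet (n m : ℕ) (S : Finset ℕ) :
    (ofAscentSet n S).take m = ofAscentSet (min m n) S := by
  rw [ofAscentSet, ← List.map_take, List.take_range, ofAscentSet]

lemma ascentSet_ofAscentSet (n : ℕ) (S : Finset ℕ) :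
    ascentSet (ofAscentSet n S) = {j ∈ range (n - 1) | j ∈ S} := by
  ext j
  simp only [ascentSet, length_ofAscentSet, mem_filter, mem_range]
  by_cases hj : j + 1 < n
  · rw [getD_ofAscentSet S (by omega), getD_ofAscentSet S hj, Nat.count_succ]
    split_ifs with hjS
    · simp only [hjS, and_true, Nat.lt_add_one]
    · simp [hjS]
  · omega

lemma ascentSet_ofAscentSet_of_subset {n : ℕ} {S : Finset ℕ} (hS : S ⊆ range (n - 1)) :
    ascentSet (ofAscentSet n S) = S := by
  rw [ascentSet_ofAscentSet, filter_mem_eq_inter, inter_eq_right.mpr hS]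

lemma ascList_ofAscentSet (n : ℕ) (S : Finset ℕ) :
    ascList (ofAscentSet n S) = Nat.count (· ∈ S) (n - 1) := by
  rw [ascList_eq_card_ascentSet, ascentSet_ofAscentSet, Nat.count_eq_card_filter_range]

lemma ofAscentSet_ascentSet {l : List ℕ} (hl : IsAscSeq l) (h10 : ¬Contains10 l) :
    ofAscentSet l.length (ascentSet l) = l := by
  apply List.ext_getElem (length_ofAscentSet _ _)
  intro i hi _
  rw [length_ofAscentSet] at hi
  rw [← List.getD_eq_getElem _ 0, ← List.getD_eq_getElem _ 0, getD_ofAscentSet _ hi,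
    getD_eq_count_ascentSet hl h10 hi]

lemma isAscSeq_ofAscentSet {n : ℕ} (hn : 0 < n) (S : Finset ℕ) : IsAscSeq (ofAscentSet n S) := by
  refine ⟨?_, ?_, ?_⟩
  · rw [← List.length_pos_iff, length_ofAscentSet]; exact hn
  · rw [getD_ofAscentSet S hn, Nat.count_zero]
  · rintro (_ | i) hi0 hi
    · exact absurd hi0 (lt_irrefl 0)
    rw [length_ofAscentSet] at hi
    rw [getD_ofAscentSet S hi, take_ofAscentSet, min_eq_left hi.le, ascList_ofAscentSet,
      Nat.add_sub_cancel, Nat.count_succ]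
    split_ifs <;> omega

lemma not_contains10_ofAscentSet (n : ℕ) (S : Finset ℕ) : ¬Contains10 (ofAscentSet n S) := by
  rintro ⟨i, j, hij, hj, hlt⟩
  rw [length_ofAscentSet] at hj
  rw [getD_ofAscentSet S hj, getD_ofAscentSet S (hij.trans hj)] at hlt
  exact hlt.not_ge (Nat.count_monotone _ hij.le)

/-- The number of 10-avoiding ascent sequences of length `n` with exactly `k` ascents
is `(n-1).choose k`. -/
theorem stmt3 (n k : ℕ) (hn : 1 ≤ n) :
    {l : List ℕ | l.length = n ∧ IsAscSeq l ∧ ¬ Contains10 l ∧ ascList l = k}.ncard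
      = (n - 1).choose k := by
  have hset : {l : List ℕ | l.length = n ∧ IsAscSeq l ∧ ¬ Contains10 l ∧ ascList l = k}
      = ((range (n - 1)).powersetCard k).image (ofAscentSet n) := by
    ext l
    simp only [Set.mem_ofPred_eq, coe_image, Set.mem_image, mem_coe, mem_powersetCard]
    constructor
    · rintro ⟨rfl, hl, h10, rfl⟩
      exact ⟨ascentSet l, ⟨filter_subset _ _, (ascList_eq_card_ascentSet l).symm⟩,
        ofAscentSet_ascentSet hl h10⟩
    · rintro ⟨S, ⟨hS, rfl⟩, rfl⟩
      exact ⟨length_ofAscentSet n S, isAscSeq_ofAscentSet hn S, not_contains10_ofAscentSet n S,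
        by rw [ascList_eq_card_ascentSet, ascentSet_ofAscentSet_of_subset hS]⟩
  have hinj : Set.InjOn (ofAscentSet n) ((range (n - 1)).powersetCard k) := fun S hS T hT h => by
    rw [mem_coe, mem_powersetCard] at hS hT
    rw [← ascentSet_ofAscentSet_of_subset hS.1, h, ascentSet_ofAscentSet_of_subset hT.1]
  rw [hset, Set.ncard_coe_finset, Finset.card_image_of_injOn hinj, card_powersetCard, card_range]
end

section
/- An ascent sequence avoids the pattern 012 if and only if every letter after the first is 0 or 1; consequently the number of ascent sequences of length n avoiding 012 is 2^{n-1}. -/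
/-- A sequence contains the pattern 012. -/
def Contains012 (l : List ℕ) : Prop :=
  ∃ i j k, i < j ∧ j < k ∧ k < l.length ∧
    l.getD i 0 < l.getD j 0 ∧ l.getD j 0 < l.getD k 0

theorem List.getD_take_of_lt {α : Type*} {l : List α} {i j : ℕ} {d : α} (h : j < i) :
    (l.take i).getD j d = l.getD j d := by
  simp [List.getD_eq_getElem?_getD, h]

theorem List.forall_getD_cons_iff {α : Type*} (a d : α) (t : List α) (p : α → Prop) :
    (∀ i, 0 < i → i < (a :: t).length → p ((a :: t).getD i d)) ↔ ∀ x ∈ t, p x := by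
  constructor
  · intro h x hx
    obtain ⟨j, hj, rfl⟩ := List.mem_iff_getElem.1 hx
    have := h (j + 1) (by omega) (by simpa using hj)
    rwa [List.getD_cons_succ, List.getD_eq_getElem _ _ hj] at this
  · rintro h (_ | j) hj₀ hj
    · omega
    · simp only [List.length_cons, Nat.add_lt_add_iff_right] at hj
      rw [List.getD_cons_succ, List.getD_eq_getElem _ _ hj]
      exact h _ (List.getElem_mem hj)

theorem ncard_setOf_length_eq_forall_lt (m k : ℕ) :
    {l : List ℕ | l.length = m ∧ ∀ x ∈ l, x < k}.ncard = k ^ m := by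
  have hrange : Set.range (fun f : Fin m → Fin k => List.ofFn fun i => (f i : ℕ)) =
      {l : List ℕ | l.length = m ∧ ∀ x ∈ l, x < k} := by
    ext l
    constructor
    · rintro ⟨f, rfl⟩
      simp
    · rintro ⟨rfl, hl⟩
      exact ⟨fun i => ⟨l[i], hl _ (List.getElem_mem _)⟩, List.ofFn_getElem⟩
  have hinj : Function.Injective (fun f : Fin m → Fin k => List.ofFn fun i => (f i : ℕ)) := by
    intro f g h
    funext i
    exact Fin.ext (congrFun (List.ofFn_injective h) i)
  rw [← hrange, Set.ncard_range_of_injective hinj, Nat.card_fun]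
  simp

theorem exists_getD_lt_getD_succ_of_ascList_pos {l : List ℕ} (h : 0 < ascList l) :
    ∃ j, j + 1 < l.length ∧ l.getD j 0 < l.getD (j + 1) 0 := by
  obtain ⟨p, hp, hlt⟩ := List.countP_pos_iff.1 h
  obtain ⟨j, hj, rfl⟩ := List.mem_iff_getElem.1 hp
  simp only [List.length_zip, List.length_tail, lt_min_iff] at hj
  refine ⟨j, by omega, ?_⟩
  rw [List.getD_eq_getElem _ _ (by omega), List.getD_eq_getElem _ _ (by omega)]
  simpa [List.getElem_zip, List.getElem_tail] using hlt

theorem IsAscSeq.contains012_of_one_lt_getD {l : List ℕ} (hl : IsAscSeq l) {i : ℕ}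
    (hi₀ : 0 < i) (hi : i < l.length) (h : 1 < l.getD i 0) : Contains012 l := by
  induction i using Nat.strong_induction_on with
  | _ i ih =>
  have hasc : 0 < ascList (l.take i) := by
    have := hl.2.2 i hi₀ hi
    omega
  obtain ⟨j, hj, hlt⟩ := exists_getD_lt_getD_succ_of_ascList_pos hasc
  rw [List.length_take, min_eq_left hi.le] at hj
  rw [List.getD_take_of_lt (by omega), List.getD_take_of_lt hj] at hlt
  by_cases hle : l.getD (j + 1) 0 ≤ 1
  · exact ⟨j, j + 1, i, by omega, hj, hi, hlt, by omega⟩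
  · exact ih (j + 1) hj (by omega) (by omega) (by omega)

theorem not_contains012_of_getD_le_one {l : List ℕ}
    (h : ∀ i, 0 < i → i < l.length → l.getD i 0 ≤ 1) : ¬ Contains012 l := by
  rintro ⟨_, j, k, hij, hjk, hk, hlt₁, hlt₂⟩
  have := h k (by omega) hk
  omega

theorem IsAscSeq.not_contains012_iff {l : List ℕ} (hl : IsAscSeq l) :
    ¬ Contains012 l ↔ ∀ i, 0 < i → i < l.length → l.getD i 0 ≤ 1 :=
  ⟨fun h _ hi₀ hi => not_lt.1 fun hlt => h (hl.contains012_of_one_lt_getD hi₀ hi hlt),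
    not_contains012_of_getD_le_one⟩

theorem isAscSeq_cons_zero {t : List ℕ} (ht : ∀ x ∈ t, x ≤ 1) : IsAscSeq (0 :: t) :=
  ⟨List.cons_ne_nil _ _, rfl, fun i hi₀ hi =>
    ((List.forall_getD_cons_iff 0 0 t (· ≤ 1)).2 ht i hi₀ hi).trans (Nat.le_add_left _ _)⟩

theorem setOf_isAscSeq_not_contains012_eq_image {n : ℕ} (hn : 1 ≤ n) :
    {l : List ℕ | l.length = n ∧ IsAscSeq l ∧ ¬ Contains012 l} =
      List.cons 0 '' {t : List ℕ | t.length = n - 1 ∧ ∀ x ∈ t, x < 2} := by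
  ext l
  constructor
  · rintro ⟨hlen, hl, havoid⟩
    rcases l with _ | ⟨a, t⟩
    · exact absurd rfl hl.1
    obtain rfl : a = 0 := hl.2.1
    have ht := (List.forall_getD_cons_iff 0 0 t (· ≤ 1)).1 (hl.not_contains012_iff.1 havoid)
    simp only [List.length_cons] at hlen
    exact ⟨t, ⟨by omega, fun x hx => Nat.lt_succ_of_le (ht x hx)⟩, rfl⟩
  · rintro ⟨t, ⟨hlen, ht⟩, rfl⟩
    have ht' : ∀ x ∈ t, x ≤ 1 := fun x hx => Nat.le_of_lt_succ (ht x hx)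
    have hl := isAscSeq_cons_zero ht'
    refine ⟨by simp only [List.length_cons]; omega, hl, ?_⟩
    exact hl.not_contains012_iff.2 ((List.forall_getD_cons_iff 0 0 t (· ≤ 1)).2 ht')

/-- An ascent sequence avoids 012 iff every letter after the first is 0 or 1;
consequently there are `2^(n-1)` ascent sequences of length `n` avoiding 012. -/
theorem stmt7 (n : ℕ) (hn : 1 ≤ n) :
    (∀ l : List ℕ, IsAscSeq l →
      (¬ Contains012 l ↔ ∀ i, 0 < i → i < l.length → l.getD i 0 ≤ 1)) ∧
    {l : List ℕ | l.length = n ∧ IsAscSeq l ∧ ¬ Contains012 l}.ncard = 2 ^ (n - 1) := by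
  refine ⟨fun l hl => hl.not_contains012_iff, ?_⟩
  rw [setOf_isAscSeq_not_contains012_eq_image hn,
    Set.ncard_image_of_injective _ List.cons_injective, ncard_setOf_length_eq_forall_lt]
end

section
/- If an ascent sequence x is not a restricted growth function, then x contains the pattern 01012. Equivalently, every ascent sequence avoiding the pattern 01012 is a restricted growth function. -/
/-- A restricted growth function: starts with 0, and every occurrence of a letter `k+1`
is preceded by an occurrence of `k`. -/
def IsRGF (l : List ℕ) : Prop :=
  l.getD 0 0 = 0 ∧
    ∀ i < l.length, ∀ k, l.getD i 0 = k + 1 → ∃ j < i, l.getD j 0 = k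

/-- A sequence contains the pattern 01012. -/
def Contains01012 (l : List ℕ) : Prop :=
  ∃ i1 i2 i3 i4 i5, i1 < i2 ∧ i2 < i3 ∧ i3 < i4 ∧ i4 < i5 ∧ i5 < l.length ∧
    l.getD i1 0 = l.getD i3 0 ∧ l.getD i2 0 = l.getD i4 0 ∧
    l.getD i1 0 < l.getD i2 0 ∧ l.getD i4 0 < l.getD i5 0

/-!
Let `i` be the first position violating the RGF condition, with `x_i = k + 1` and no `k`
before it. The prefix before `i` is an RGF, hence downward closed, so all its letters are
`< k`; yet the ascent condition gives it at least `k` ascents. The tops of those ascents lie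
in `{1, …, k - 1}`, so two ascents `x_p < x_{p+1} = b` and `x_q < x_{q+1} = b` share a top,
`p + 1 < q`. Downward closure puts `a = x_q` before position `p + 1`, and
`a b a b (k+1)` is an occurrence of 01012.
-/

open Finset

theorem ascList_eq_card_filter : ∀ l : List ℕ,
    ascList l = #{p ∈ range (l.length - 1) | l.getD p 0 < l.getD (p + 1) 0}
  | [] => by simp [ascList]
  | [a] => by simp [ascList]
  | a :: b :: t => by
      have hcons : ascList (a :: b :: t) = ascList (b :: t) + if a < b then 1 else 0 := by
        simp [ascList, List.countP_cons]
      rw [hcons, ascList_eq_card_filter (b :: t), card_filter, card_filter]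
      simp only [List.length_cons, Nat.add_sub_cancel, sum_range_succ']
      simp

theorem ascList_take_eq_card_filter (l : List ℕ) {i : ℕ} (hi : i ≤ l.length) :
    ascList (l.take i) = #{p ∈ range (i - 1) | l.getD p 0 < l.getD (p + 1) 0} := by
  rw [ascList_eq_card_filter, List.length_take, min_eq_left hi]
  congr 1
  refine filter_congr fun p hp => ?_
  have hp : p + 1 < i := by rw [mem_range] at hp; omega
  simp [List.getD_eq_getElem?_getD, List.getElem?_take_of_lt hp,
    List.getElem?_take_of_lt (Nat.lt_of_succ_lt hp)]

theorem exists_ascents_with_equal_top {f : ℕ → ℕ} {n k : ℕ} (hn : 0 < n) (hlt : ∀ j < n, f j < k)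
    (hasc : k ≤ #{p ∈ range (n - 1) | f p < f (p + 1)}) :
    ∃ p q, p + 1 < q ∧ q + 1 < n ∧ f q < f (p + 1) ∧ f (q + 1) = f (p + 1) := by
  set S := {p ∈ range (n - 1) | f p < f (p + 1)}
  have hmaps : ∀ p ∈ S, f (p + 1) ∈ Icc 1 (k - 1) := by
    intro p hp
    rw [mem_filter, mem_range] at hp
    have := hlt (p + 1) (by omega)
    exact mem_Icc.2 ⟨by omega, by omega⟩
  have hcard : #(Icc 1 (k - 1)) < #S := by
    have := hlt 0 hn
    rw [Nat.card_Icc]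
    omega
  obtain ⟨p, hp, q, hq, hpq, htop⟩ := exists_ne_map_eq_of_card_lt_of_maps_to hcard hmaps
  wlog hlt_pq : p < q generalizing p q
  · exact this q hq p hp hpq.symm htop.symm (by omega)
  rw [mem_filter, mem_range] at hp hq
  have hne : q ≠ p + 1 := by rintro rfl; omega
  exact ⟨p, q, by omega, by omega, htop ▸ hq.2, htop.symm⟩

def IsRGFBefore (l : List ℕ) (i : ℕ) : Prop :=
  ∀ j < i, ∀ m, l.getD j 0 = m + 1 → ∃ r < j, l.getD r 0 = m

namespace IsRGFBefore

variable {l : List ℕ} {i : ℕ}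

theorem exists_getD_eq_of_lt (h : IsRGFBefore l i) :
    ∀ j < i, ∀ a < l.getD j 0, ∃ r < j, l.getD r 0 = a := by
  intro j
  induction j using Nat.strong_induction_on with
  | _ j ih =>
    intro hj a ha
    obtain ⟨r, hr, hrm⟩ := h j hj (l.getD j 0 - 1) (by omega)
    rcases (show a ≤ l.getD j 0 - 1 by omega).eq_or_lt with rfl | hlt
    · exact ⟨r, hr, hrm⟩
    · obtain ⟨r', hr', hr'a⟩ := ih r hr (hr.trans hj) a (hrm ▸ hlt)
      exact ⟨r', hr'.trans hr, hr'a⟩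

theorem getD_lt_of_forall_ne (h : IsRGFBefore l i) {k : ℕ} (hk : ∀ j < i, l.getD j 0 ≠ k) :
    ∀ j < i, l.getD j 0 < k := by
  intro j hj
  by_contra hge
  rcases (not_lt.1 hge).eq_or_lt with heq | hlt
  · exact hk j hj heq.symm
  · obtain ⟨r, hr, hrk⟩ := h.exists_getD_eq_of_lt j hj k hlt
    exact hk r (hr.trans hj) hrk

end IsRGFBefore

theorem exists_first_rgf_violation {l : List ℕ} (h0 : l.getD 0 0 = 0) (hl : ¬ IsRGF l) :
    ∃ i < l.length, ∃ k, l.getD i 0 = k + 1 ∧ (∀ j < i, l.getD j 0 ≠ k) ∧ IsRGFBefore l i := by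
  classical
  have hex : ∃ i, i < l.length ∧ ∃ k, l.getD i 0 = k + 1 ∧ ∀ j < i, l.getD j 0 ≠ k := by
    simpa only [IsRGF, h0, true_and, not_forall, not_exists, not_and, exists_prop] using hl
  obtain ⟨hi, k, hk, hnot⟩ := Nat.find_spec hex
  refine ⟨Nat.find hex, hi, k, hk, hnot, fun j hj m hm => ?_⟩
  by_contra hc
  push Not at hc
  exact Nat.find_min hex hj ⟨hj.trans hi, m, hm, hc⟩

/-- Every ascent sequence avoiding the pattern 01012 is a restricted growth function. -/
theorem stmt9 (l : List ℕ) (h : IsAscSeq l) (hav : ¬ Contains01012 l) : IsRGF l := by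
  obtain ⟨-, h0, hasc⟩ := h
  by_contra hl
  obtain ⟨i, hi, k, hik, hk, hrgf⟩ := exists_first_rgf_violation h0 hl
  have hi0 : 0 < i := Nat.pos_of_ne_zero (by rintro rfl; omega)
  have hlt : ∀ j < i, l.getD j 0 < k := hrgf.getD_lt_of_forall_ne hk
  have hmany : k ≤ #{p ∈ range (i - 1) | l.getD p 0 < l.getD (p + 1) 0} := by
    have := hasc i hi0 hi
    rw [ascList_take_eq_card_filter l hi.le] at this
    omega
  obtain ⟨p, q, hpq, hqi, hq, htop⟩ := exists_ascents_with_equal_top hi0 hlt hmany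
  obtain ⟨r, hr, hra⟩ := hrgf.exists_getD_eq_of_lt (p + 1) (by omega) _ hq
  have := hlt (q + 1) hqi
  exact hav ⟨r, p + 1, q, q + 1, i, hr, hpq, q.lt_succ_self, hqi, hi, hra, htop.symm,
    hra ▸ hq, by omega⟩
end

section
/- The number of ascent sequences of length n avoiding the pattern 101 equals the n-th Catalan number, and the number of such sequences with exactly k ascents is the Narayana number N(n,k+1) (the same as the ascent distribution on 312-avoiding permutations). -/
/-- A sequence contains the pattern 101. -/
def Contains101 (l : List ℕ) : Prop :=
  ∃ i j k, i < j ∧ j < k ∧ k < l.length ∧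
    l.getD j 0 < l.getD i 0 ∧ l.getD i 0 = l.getD k 0

/-!
Appending a letter `v` to a 101-avoiding ascent sequence `s` gives another one exactly when `v` is
the new maximum `ascList s + 1`, or `v` is admissible: at most the last letter of `s` and not
followed in `s` by a smaller letter. The admissible letters form a stack, so labelling `s` by their
number, the sequences form the Catalan generating tree `(a) → (1) (2) … (a) (a + 1)`, in which only
the child `a + 1` adds an ascent. Solving this recurrence, the sequences of length `a + b + j` with
label `a` and `a + b - 1` ascents number `a / (a + b) * C(a + b + j - 1, j) * multichoose j b`. The
sequences of length `n` with `k` ascents correspond to the children of label `1`, of which there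
are `C(n, k) C(n - 1, k) / (k + 1) = N(n, k + 1)`, and Vandermonde's identity sums these to `C_n`.
-/

namespace AscentSequence

open Finset

def IsAscSeqAvoiding101 (l : List ℕ) : Prop := IsAscSeq l ∧ ¬ Contains101 l

def OccursBeforeSmaller (s : List ℕ) (v : ℕ) : Prop :=
  ∃ i j, i < j ∧ j < s.length ∧ s.getD i 0 = v ∧ s.getD j 0 < v

lemma mem_iff_exists_getD {s : List ℕ} {w : ℕ} :
    w ∈ s ↔ ∃ i < s.length, s.getD i 0 = w := by
  rw [List.mem_iff_getElem]
  constructor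
  · rintro ⟨i, hi, rfl⟩; exact ⟨i, hi, List.getD_eq_getElem _ _ hi⟩
  · rintro ⟨i, hi, rfl⟩; exact ⟨i, hi, (List.getD_eq_getElem _ _ hi).symm⟩

lemma getD_length_sub_one (l : List ℕ) : l.getD (l.length - 1) 0 = l.getLastD 0 := by
  simp [List.getD_eq_getElem?_getD, List.getLastD_eq_getLast?, List.getLast?_eq_getElem?]

lemma getLastD_mem {l : List ℕ} (hl : l ≠ []) : l.getLastD 0 ∈ l := by
  rw [← getD_length_sub_one, mem_iff_exists_getD]
  exact ⟨_, by have := List.length_pos_iff.mpr hl; omega, rfl⟩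

lemma ascList_cons_cons (x y : ℕ) (t : List ℕ) :
    ascList (x :: y :: t) = (if x < y then 1 else 0) + ascList (y :: t) := by
  simp only [ascList, List.tail_cons, List.zip_cons_cons, List.countP_cons]
  split_ifs <;> simp_all [Nat.add_comm]

lemma ascList_append_singleton {s : List ℕ} (hs : s ≠ []) (v : ℕ) :
    ascList (s ++ [v]) = ascList s + if s.getLastD 0 < v then 1 else 0 := by
  induction s with
  | nil => exact absurd rfl hs
  | cons x r ih =>
    rcases r with _ | ⟨y, t⟩
    · simp [ascList]
    · simp only [List.cons_append] at ih ⊢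
      rw [ascList_cons_cons, ih (List.cons_ne_nil _ _), ascList_cons_cons]
      simp only [List.getLastD_cons, Nat.add_assoc]

lemma ascList_lt_length {l : List ℕ} (hl : l ≠ []) : ascList l < l.length := by
  have h1 :=
    List.countP_le_length (p := fun p : ℕ × ℕ => decide (p.1 < p.2)) (l := l.zip l.tail)
  have h2 : (l.zip l.tail).length = l.length - 1 := by simp
  have := List.length_pos_iff.mpr hl
  unfold ascList; omega

lemma getD_append_singleton_of_lt {s : List ℕ} (v : ℕ) {i : ℕ} (h : i < s.length) :
    (s ++ [v]).getD i 0 = s.getD i 0 :=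
  List.getD_append _ _ _ _ h

lemma getD_append_singleton_length (s : List ℕ) (v : ℕ) : (s ++ [v]).getD s.length 0 = v := by
  simp

lemma isAscSeq_append_singleton {s : List ℕ} (hs : s ≠ []) (v : ℕ) :
    IsAscSeq (s ++ [v]) ↔ IsAscSeq s ∧ v ≤ ascList s + 1 := by
  have hlen : 0 < s.length := List.length_pos_iff.mpr hs
  have htake : ∀ i ≤ s.length, (s ++ [v]).take i = s.take i :=
    fun i hi => List.take_append_of_le_length hi
  constructor
  · rintro ⟨-, h0, hle⟩
    refine ⟨⟨hs, ?_, fun i hi hilen => ?_⟩, ?_⟩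
    · rwa [getD_append_singleton_of_lt v hlen] at h0
    · have := hle i hi (by simp; omega)
      rwa [getD_append_singleton_of_lt v hilen, htake i hilen.le] at this
    · simpa [htake] using hle s.length hlen (by simp)
  · rintro ⟨⟨-, h0, hle⟩, hv⟩
    refine ⟨by simp, by rwa [getD_append_singleton_of_lt v hlen], fun i hi hilen => ?_⟩
    rcases lt_or_ge i s.length with h | h
    · rw [getD_append_singleton_of_lt v h, htake i h.le]
      exact hle i hi h
    · obtain rfl : i = s.length := by simp at hilen; omega
      simpa [htake] using hv

lemma contains101_append_singleton (s : List ℕ) (v : ℕ) :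
    Contains101 (s ++ [v]) ↔ Contains101 s ∨ OccursBeforeSmaller s v := by
  constructor
  · rintro ⟨i, j, k, hij, hjk, hk, hlt, heq⟩
    have hi : i < s.length := by simp at hk; omega
    rw [getD_append_singleton_of_lt v hi] at hlt heq
    rcases lt_or_ge k s.length with h | h
    · rw [getD_append_singleton_of_lt v (i := j) (by omega)] at hlt
      rw [getD_append_singleton_of_lt v h] at heq
      exact Or.inl ⟨i, j, k, hij, hjk, h, hlt, heq⟩
    · obtain rfl : k = s.length := by simp at hk; omega
      rw [getD_append_singleton_of_lt v hjk] at hlt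
      rw [getD_append_singleton_length] at heq
      exact Or.inr ⟨i, j, hij, hjk, heq, heq ▸ hlt⟩
  · rintro (⟨i, j, k, hij, hjk, hk, hlt, heq⟩ | ⟨i, j, hij, hj, rfl, hlt⟩)
    · refine ⟨i, j, k, hij, hjk, by simp; omega, ?_, ?_⟩
      · rwa [getD_append_singleton_of_lt v (i := i) (by omega),
          getD_append_singleton_of_lt v (i := j) (by omega)]
      · rwa [getD_append_singleton_of_lt v (i := i) (by omega), getD_append_singleton_of_lt v hk]
    · refine ⟨i, j, s.length, hij, hj, by simp, ?_, ?_⟩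
      · rwa [getD_append_singleton_of_lt _ (i := i) (by omega), getD_append_singleton_of_lt _ hj]
      · rw [getD_append_singleton_of_lt _ (i := i) (by omega), getD_append_singleton_length]

lemma occursBeforeSmaller_append_singleton (s : List ℕ) (v w : ℕ) :
    OccursBeforeSmaller (s ++ [v]) w ↔ OccursBeforeSmaller s w ∨ (w ∈ s ∧ v < w) := by
  rw [mem_iff_exists_getD]
  constructor
  · rintro ⟨i, j, hij, hj, rfl, hjlt⟩
    have hi : i < s.length := by simp at hj; omega
    rw [getD_append_singleton_of_lt v hi] at hjlt ⊢
    rcases lt_or_ge j s.length with h | h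
    · rw [getD_append_singleton_of_lt v h] at hjlt
      exact Or.inl ⟨i, j, hij, h, rfl, hjlt⟩
    · obtain rfl : j = s.length := by simp at hj; omega
      rw [getD_append_singleton_length] at hjlt
      exact Or.inr ⟨⟨i, hij, rfl⟩, hjlt⟩
  · rintro (⟨i, j, hij, hj, rfl, hjlt⟩ | ⟨⟨i, hi, rfl⟩, hlt⟩)
    · refine ⟨i, j, hij, by simp; omega, getD_append_singleton_of_lt v (by omega), ?_⟩
      rwa [getD_append_singleton_of_lt v hj]
    · refine ⟨i, s.length, hi, by simp, getD_append_singleton_of_lt v hi, ?_⟩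
      rwa [getD_append_singleton_length]

lemma isAscSeqAvoiding101_append_singleton {s : List ℕ} (hs : s ≠ []) (v : ℕ) :
    IsAscSeqAvoiding101 (s ++ [v]) ↔
      IsAscSeqAvoiding101 s ∧ v ≤ ascList s + 1 ∧ ¬ OccursBeforeSmaller s v := by
  simp only [IsAscSeqAvoiding101, isAscSeq_append_singleton hs, contains101_append_singleton]
  tauto

lemma isAscSeqAvoiding101_singleton_iff (v : ℕ) : IsAscSeqAvoiding101 [v] ↔ v = 0 := by
  constructor
  · exact fun h => h.1.2.1
  · rintro rfl
    refine ⟨⟨by simp, rfl, fun i hi hlen => by simp at hlen; omega⟩, ?_⟩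
    rintro ⟨i, j, k, hij, hjk, hk, -⟩
    simp at hk; omega

lemma occursBeforeSmaller_of_mem {s : List ℕ} {w : ℕ} (hw : w ∈ s) (hlt : s.getLastD 0 < w) :
    OccursBeforeSmaller s w := by
  obtain ⟨i, hi, rfl⟩ := mem_iff_exists_getD.mp hw
  have hne : i ≠ s.length - 1 := by
    rintro rfl; rw [getD_length_sub_one] at hlt; omega
  exact ⟨i, s.length - 1, by omega, by omega, rfl, by rwa [getD_length_sub_one]⟩

lemma le_ascList_of_mem {l : List ℕ} (hl : IsAscSeq l) {x : ℕ} (hx : x ∈ l) :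
    x ≤ ascList l := by
  induction l using List.reverseRecOn generalizing x with
  | nil => simp at hx
  | append_singleton s v ih =>
    rcases eq_or_ne s [] with rfl | hs
    · obtain rfl : v = 0 := hl.2.1
      simp_all
    obtain ⟨hs', hv⟩ := (isAscSeq_append_singleton hs v).mp hl
    have hlast := ih hs' (getLastD_mem hs)
    rw [ascList_append_singleton hs]
    rcases List.mem_append.mp hx with hx | hx
    · exact (ih hs' hx).trans (Nat.le_add_right _ _)
    · obtain rfl : x = v := by simpa using hx
      split_ifs <;> omega

lemma mem_of_le_ascList {l : List ℕ} (hl : IsAscSeqAvoiding101 l) {w : ℕ}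
    (hw : w ≤ ascList l) : w ∈ l := by
  induction l using List.reverseRecOn generalizing w with
  | nil => exact absurd rfl hl.1.1
  | append_singleton s v ih =>
    rcases eq_or_ne s [] with rfl | hs
    · obtain rfl : v = 0 := hl.1.2.1
      simp_all [ascList]
    obtain ⟨hs', hv, hnot⟩ := (isAscSeqAvoiding101_append_singleton hs v).mp hl
    rw [ascList_append_singleton hs] at hw
    refine List.mem_append.mpr ?_
    split_ifs at hw with hlt
    · rcases Nat.lt_or_ge w (ascList s + 1) with h | h
      · exact Or.inl (ih hs' (by omega))
      · right
        have : ascList s < v := by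
          by_contra! hle
          exact hnot (occursBeforeSmaller_of_mem (ih hs' hle) hlt)
        simp; omega
    · exact Or.inl (ih hs' (by omega))

lemma getLastD_le_ascList {l : List ℕ} (hl : IsAscSeqAvoiding101 l) :
    l.getLastD 0 ≤ ascList l :=
  le_ascList_of_mem hl.1 (getLastD_mem hl.1.1)

/-- The letters that can be appended to `s` without creating an ascent or a 101. They behave like
a stack: appending one of them, `v`, discards those above `v`, while the only other legal letter,
`ascList s + 1`, is pushed on top. -/
noncomputable def admissible (s : List ℕ) : Finset ℕ :=
  open Classical in (range (s.getLastD 0 + 1)).filter (fun v => ¬ OccursBeforeSmaller s v)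

noncomputable def label (s : List ℕ) : ℕ := (admissible s).card

noncomputable def rank (s : List ℕ) (v : ℕ) : ℕ := ((admissible s).filter (· ≤ v)).card

lemma mem_admissible {s : List ℕ} {v : ℕ} :
    v ∈ admissible s ↔ v ≤ s.getLastD 0 ∧ ¬ OccursBeforeSmaller s v := by
  simp [admissible]

lemma getLastD_mem_admissible {l : List ℕ} (hl : IsAscSeqAvoiding101 l) :
    l.getLastD 0 ∈ admissible l := by
  refine mem_admissible.mpr ⟨le_rfl, ?_⟩
  rintro ⟨i, j, hij, hj, hi, hjlt⟩
  have hne : j ≠ l.length - 1 := by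
    rintro rfl; rw [getD_length_sub_one] at hjlt; omega
  exact hl.2 ⟨i, j, l.length - 1, hij, by omega, by omega, by rwa [hi],
    by rw [hi, getD_length_sub_one]⟩

lemma label_pos {l : List ℕ} (hl : IsAscSeqAvoiding101 l) : 0 < label l :=
  Finset.card_pos.mpr ⟨_, getLastD_mem_admissible hl⟩

lemma label_le_ascList_add_one {l : List ℕ} (hl : IsAscSeqAvoiding101 l) :
    label l ≤ ascList l + 1 := by
  have hsub : admissible l ⊆ range (l.getLastD 0 + 1) :=
    fun v hv => Finset.mem_range.mpr (Nat.lt_succ_of_le (mem_admissible.mp hv).1)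
  have := getLastD_le_ascList hl
  exact (Finset.card_le_card hsub).trans (by simpa using this)

lemma isAscSeqAvoiding101_append_singleton_iff {s : List ℕ} (hs : IsAscSeqAvoiding101 s)
    (v : ℕ) :
    IsAscSeqAvoiding101 (s ++ [v]) ↔ v ∈ admissible s ∨ v = ascList s + 1 := by
  rw [isAscSeqAvoiding101_append_singleton hs.1.1, mem_admissible]
  have hlast := getLastD_le_ascList hs
  constructor
  · rintro ⟨-, hv, hnot⟩
    by_cases hle : v ≤ s.getLastD 0
    · exact Or.inl ⟨hle, hnot⟩
    · refine Or.inr (le_antisymm hv (Nat.succ_le_of_lt (not_le.mp fun h => hnot ?_)))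
      exact occursBeforeSmaller_of_mem (mem_of_le_ascList hs h) (by omega)
  · rintro (⟨hle, hnot⟩ | rfl)
    · exact ⟨hs, by omega, hnot⟩
    · refine ⟨hs, le_rfl, fun ⟨i, j, hij, hj, hi, _⟩ => ?_⟩
      have := le_ascList_of_mem hs.1 (mem_iff_exists_getD.mpr ⟨i, by omega, hi⟩)
      omega

lemma ascList_append_of_mem_admissible {s : List ℕ} (hs : s ≠ []) {v : ℕ}
    (hv : v ∈ admissible s) : ascList (s ++ [v]) = ascList s := by
  rw [ascList_append_singleton hs, if_neg (not_lt.mpr (mem_admissible.mp hv).1), add_zero]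

lemma admissible_append_of_mem_admissible {s : List ℕ} {v : ℕ} (hv : v ∈ admissible s) :
    admissible (s ++ [v]) = (admissible s).filter (· ≤ v) := by
  ext w
  simp only [mem_admissible, Finset.mem_filter, List.getLastD_concat,
    occursBeforeSmaller_append_singleton]
  have := (mem_admissible.mp hv).1
  constructor
  · rintro ⟨hwv, hnot⟩
    exact ⟨⟨hwv.trans this, fun h => hnot (Or.inl h)⟩, hwv⟩
  · rintro ⟨⟨-, hnot⟩, hwv⟩
    exact ⟨hwv, by rintro (h | ⟨-, h⟩) <;> [exact hnot h; omega]⟩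

lemma label_append_of_mem_admissible {s : List ℕ} {v : ℕ} (hv : v ∈ admissible s) :
    label (s ++ [v]) = rank s v := by
  rw [label, admissible_append_of_mem_admissible hv, rank]

lemma ascList_append_ascList_add_one {s : List ℕ} (hs : IsAscSeqAvoiding101 s) :
    ascList (s ++ [ascList s + 1]) = ascList s + 1 := by
  rw [ascList_append_singleton hs.1.1, if_pos (Nat.lt_succ_of_le (getLastD_le_ascList hs))]

lemma admissible_append_ascList_add_one {s : List ℕ} (hs : IsAscSeqAvoiding101 s) :
    admissible (s ++ [ascList s + 1]) = insert (ascList s + 1) (admissible s) := by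
  have hlast := getLastD_le_ascList hs
  ext w
  simp only [mem_admissible, Finset.mem_insert, List.getLastD_concat,
    occursBeforeSmaller_append_singleton]
  constructor
  · rintro ⟨hw, hnot⟩
    refine (eq_or_lt_of_le hw).imp id fun hlt => ⟨not_lt.mp fun h => hnot (Or.inl ?_),
      fun h => hnot (Or.inl h)⟩
    exact occursBeforeSmaller_of_mem (mem_of_le_ascList hs (by omega)) h
  · have hnot : ¬ OccursBeforeSmaller s (ascList s + 1) := fun ⟨i, j, hij, hj, hi, _⟩ => by
      have := le_ascList_of_mem hs.1 (mem_iff_exists_getD.mpr ⟨i, by omega, hi⟩)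
      omega
    rintro (rfl | ⟨hw, hnot'⟩)
    · exact ⟨le_rfl, by rintro (h | ⟨-, h⟩) <;> [exact hnot h; omega]⟩
    · exact ⟨by omega, by rintro (h | ⟨-, h⟩) <;> [exact hnot' h; omega]⟩

lemma label_append_ascList_add_one {s : List ℕ} (hs : IsAscSeqAvoiding101 s) :
    label (s ++ [ascList s + 1]) = label s + 1 := by
  rw [label, admissible_append_ascList_add_one hs, Finset.card_insert_of_notMem, label]
  intro h
  have := (mem_admissible.mp h).1
  have := getLastD_le_ascList hs
  omega

lemma rank_le_label (s : List ℕ) (v : ℕ) : rank s v ≤ label s :=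
  Finset.card_le_card (Finset.filter_subset _ _)

lemma rank_strictMonoOn (s : List ℕ) : StrictMonoOn (rank s) (admissible s) := by
  intro v _ v' hv' hlt
  refine Finset.card_lt_card ((Finset.ssubset_iff_of_subset fun w hw => ?_).mpr ⟨v', ?_, ?_⟩)
  · simp only [Finset.mem_filter] at hw ⊢
    exact ⟨hw.1, hw.2.trans hlt.le⟩
  · exact Finset.mem_filter.mpr ⟨hv', le_rfl⟩
  · simpa using fun _ => hlt

lemma image_rank (s : List ℕ) : (admissible s).image (rank s) = Icc 1 (label s) := by
  refine Finset.eq_of_subset_of_card_le (fun x hx => ?_) ?_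
  · obtain ⟨v, hv, rfl⟩ := Finset.mem_image.mp hx
    exact Finset.mem_Icc.mpr
      ⟨Finset.card_pos.mpr ⟨v, Finset.mem_filter.mpr ⟨hv, le_rfl⟩⟩, rank_le_label s v⟩
  · rw [Finset.card_image_of_injOn (rank_strictMonoOn s).injOn, Nat.card_Icc, label,
      Nat.add_sub_cancel]

def labelSet (n a k : ℕ) : Set (List ℕ) :=
  {l | l.length = n ∧ IsAscSeqAvoiding101 l ∧ label l = a ∧ ascList l = k}

lemma finite_setOf_length_eq (n : ℕ) :
    {l : List ℕ | l.length = n ∧ IsAscSeq l ∧ ¬ Contains101 l}.Finite := by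
  refine ((List.finite_length_eq (Fin n) n).image (List.map Fin.val)).subset ?_
  rintro l ⟨rfl, hl⟩
  have hlt : ∀ x ∈ l, x < l.length := fun x hx =>
    (le_ascList_of_mem hl.1 hx).trans_lt (ascList_lt_length hl.1.1)
  exact ⟨l.pmap Fin.mk hlt, by simp, by simp [List.map_pmap]⟩

lemma labelSet_finite (n a k : ℕ) : (labelSet n a k).Finite :=
  (finite_setOf_length_eq n).subset fun _ ⟨hlen, hl, _⟩ => ⟨hlen, hl⟩

lemma labelSet_label_zero (n k : ℕ) : labelSet n 0 k = ∅ :=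
  Set.eq_empty_of_forall_notMem fun _ ⟨_, hl, hlab, _⟩ => (label_pos hl).ne' hlab

lemma labelSet_of_length_le {n a k : ℕ} (h : n ≤ k) : labelSet n a k = ∅ :=
  Set.eq_empty_of_forall_notMem fun _ ⟨hlen, hl, _, hasc⟩ => by
    have := ascList_lt_length hl.1.1
    omega

lemma labelSet_one_one_zero : labelSet 1 1 0 = {[0]} := by
  ext l
  simp only [labelSet, Set.mem_ofPred_eq, Set.mem_singleton_iff, List.length_eq_one_iff]
  constructor
  · rintro ⟨⟨v, rfl⟩, hl, -, -⟩
    rw [(isAscSeqAvoiding101_singleton_iff v).mp hl]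
  · rintro rfl
    have hl := (isAscSeqAvoiding101_singleton_iff 0).mpr rfl
    refine ⟨⟨0, rfl⟩, hl, ?_, rfl⟩
    have := label_pos hl
    have := label_le_ascList_add_one hl
    simp [ascList] at this
    omega

lemma append_singleton_mem_labelSet_iff {s : List ℕ} (hs : IsAscSeqAvoiding101 s)
    {n c K v : ℕ} :
    s ++ [v] ∈ labelSet (n + 1) c K ↔ s.length = n ∧
      ((v ∈ admissible s ∧ rank s v = c ∧ ascList s = K) ∨
        (v = ascList s + 1 ∧ label s + 1 = c ∧ ascList s + 1 = K)) := by
  simp only [labelSet, Set.mem_ofPred_eq, List.length_append, List.length_singleton,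
    Nat.add_right_cancel_iff, isAscSeqAvoiding101_append_singleton_iff hs]
  constructor
  · rintro ⟨hlen, hv | rfl, hlab, hasc⟩
    · rw [label_append_of_mem_admissible hv] at hlab
      rw [ascList_append_of_mem_admissible hs.1.1 hv] at hasc
      exact ⟨hlen, Or.inl ⟨hv, hlab, hasc⟩⟩
    · rw [label_append_ascList_add_one hs] at hlab
      rw [ascList_append_ascList_add_one hs] at hasc
      exact ⟨hlen, Or.inr ⟨rfl, hlab, hasc⟩⟩
  · rintro ⟨hlen, ⟨hv, hlab, hasc⟩ | ⟨rfl, hlab, hasc⟩⟩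
    · exact ⟨hlen, Or.inl hv, by rw [label_append_of_mem_admissible hv, hlab],
        by rw [ascList_append_of_mem_admissible hs.1.1 hv, hasc]⟩
    · exact ⟨hlen, Or.inr rfl, by rw [label_append_ascList_add_one hs, hlab],
        by rw [ascList_append_ascList_add_one hs, hasc]⟩

lemma ncard_biUnion_finset {ι α : Type*} (F : Finset ι) {S : ι → Set α}
    (hS : ∀ i ∈ F, (S i).Finite) (h : (F : Set ι).PairwiseDisjoint S) :
    (⋃ i ∈ F, S i).ncard = ∑ i ∈ F, (S i).ncard := by
  rw [← finsum_mem_coe_finset]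
  exact F.finite_toSet.ncard_biUnion hS h

lemma ncard_eq_sum_ncard_fiber {ι α : Type*} {X : Set α} (hX : X.Finite) (f : α → ι)
    (F : Finset ι) (hf : ∀ x ∈ X, f x ∈ F) :
    X.ncard = ∑ i ∈ F, {x ∈ X | f x = i}.ncard := by
  rw [← ncard_biUnion_finset F (fun i _ => hX.subset fun x hx => hx.1)]
  · congr 1
    ext x
    simpa using fun hx => hf x hx
  · intro i _ j _ hij
    exact Set.disjoint_left.mpr fun x hi hj => hij (hi.2.symm.trans hj.2)

lemma exists_eq_append_singleton {n c K : ℕ} (hn : n ≠ 0) {l : List ℕ}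
    (hl : l ∈ labelSet (n + 1) c K) : ∃ s v, l = s ++ [v] ∧ IsAscSeqAvoiding101 s := by
  obtain ⟨hlen, hl, -⟩ := hl
  obtain ⟨s, v, rfl⟩ := (List.eq_nil_or_concat' l).resolve_left (by rintro rfl; simp at hlen)
  have hs : s ≠ [] := by rintro rfl; simp at hlen; omega
  exact ⟨s, v, rfl, ((isAscSeqAvoiding101_append_singleton hs v).mp hl).1⟩

/-- A child of label `c + 1` comes either from a parent of larger label through its admissible
letter of rank `c + 1`, or from a parent of label `c` through the new ascent. -/
lemma bijOn_dropLast_labelSet {n c K : ℕ} (hn : n ≠ 0) (hc : c ≤ K) :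
    Set.BijOn List.dropLast (labelSet (n + 1) (c + 1) K)
      ((⋃ a ∈ Icc (c + 1) (K + 1), labelSet n a K) ∪ labelSet n c (K - 1)) := by
  refine ⟨fun l hl => ?_, fun l₁ hl₁ l₂ hl₂ heq => ?_, fun s hs => ?_⟩
  · obtain ⟨s, v, rfl, hs⟩ := exists_eq_append_singleton hn hl
    rw [List.dropLast_concat]
    obtain ⟨hlen, ⟨hv, hrank, hasc⟩ | ⟨-, hlab, hasc⟩⟩ :=
      (append_singleton_mem_labelSet_iff hs).mp hl
    · refine Or.inl (Set.mem_biUnion (x := label s) ?_ ⟨hlen, hs, rfl, hasc⟩)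
      have := rank_le_label s v
      have := label_le_ascList_add_one hs
      exact Finset.mem_coe.mpr (Finset.mem_Icc.mpr ⟨by omega, by omega⟩)
    · exact Or.inr ⟨hlen, hs, by omega, by omega⟩
  · obtain ⟨s, v₁, rfl, hs⟩ := exists_eq_append_singleton hn hl₁
    obtain ⟨s₂, v₂, rfl, -⟩ := exists_eq_append_singleton hn hl₂
    obtain rfl : s = s₂ := by simpa using heq
    have h₁ := ((append_singleton_mem_labelSet_iff hs).mp hl₁).2
    have h₂ := ((append_singleton_mem_labelSet_iff hs).mp hl₂).2
    have := rank_le_label s v₁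
    have := rank_le_label s v₂
    congr 2
    rcases h₁ with ⟨hv₁, hr₁, -⟩ | ⟨rfl, hl₁, -⟩ <;>
      rcases h₂ with ⟨hv₂, hr₂, -⟩ | ⟨rfl, hl₂, -⟩
    · exact (rank_strictMonoOn s).injOn hv₁ hv₂ (hr₁.trans hr₂.symm)
    · omega
    · omega
    · rfl
  · rcases hs with hs | ⟨hlen, hs, hlab, hasc⟩
    · obtain ⟨a, ha, hlen, hs, rfl, hasc⟩ := Set.mem_iUnion₂.mp hs
      obtain ⟨v, hv, hrank⟩ : ∃ v ∈ admissible s, rank s v = c + 1 := by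
        rw [← Finset.mem_image, image_rank, Finset.mem_Icc]
        have := Finset.mem_Icc.mp ha
        omega
      exact ⟨s ++ [v], (append_singleton_mem_labelSet_iff hs).mpr
        ⟨hlen, Or.inl ⟨hv, hrank, hasc⟩⟩, List.dropLast_concat⟩
    · have := label_pos hs
      exact ⟨s ++ [ascList s + 1], (append_singleton_mem_labelSet_iff hs).mpr
        ⟨hlen, Or.inr ⟨rfl, by omega, by omega⟩⟩, List.dropLast_concat⟩

lemma ncard_labelSet_succ {n c K : ℕ} (hn : n ≠ 0) (hc : c ≤ K) :
    (labelSet (n + 1) (c + 1) K).ncard =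
      ∑ a ∈ Icc (c + 1) (K + 1), (labelSet n a K).ncard + (labelSet n c (K - 1)).ncard := by
  have hdisj : Disjoint (⋃ a ∈ Icc (c + 1) (K + 1), labelSet n a K) (labelSet n c (K - 1)) := by
    refine Set.disjoint_left.mpr fun s hs ⟨_, _, hlab, _⟩ => ?_
    obtain ⟨a, ha, -, -, rfl, -⟩ := Set.mem_iUnion₂.mp hs
    have := Finset.mem_Icc.mp ha
    omega
  have hbij := bijOn_dropLast_labelSet hn hc
  rw [← hbij.injOn.ncard_image, hbij.image_eq,
    Set.ncard_union_eq hdisj ((Finset.finite_toSet _).biUnion fun a _ => labelSet_finite n a K)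
      (labelSet_finite n c (K - 1)),
    ncard_biUnion_finset _ (fun a _ => labelSet_finite n a K)]
  intro a _ b _ hab
  exact Set.disjoint_left.mpr fun l ⟨_, _, ha, _⟩ ⟨_, _, hb, _⟩ => hab (ha.symm.trans hb)

/-- Closed form for the number of sequences of length `a + b + j` with label `a` and `a + b - 1`
ascents: `b` is how far the label is below its maximum `ascList + 1`, and `j` counts the
non-ascent steps. -/
def nodeCount (a b j : ℕ) : ℚ := a / (a + b) * ((a + b + j - 1).choose j) * j.multichoose b

lemma nodeCount_succ_right (a b j : ℕ) :
    nodeCount a b (j + 1) = a / (a + b) * ((a + b + j).choose (j + 1)) * (j + 1).multichoose b := by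
  simp [nodeCount, show a + b + (j + 1) - 1 = a + b + j by omega]

lemma nodeCount_succ_left (a b j : ℕ) :
    nodeCount (a + 1) b j = (a + 1) / (a + b + 1) * ((a + b + j).choose j) * j.multichoose b := by
  simp [nodeCount, add_right_comm]

lemma cast_choose_succ_succ (n k : ℕ) :
    ((n + 1).choose (k + 1) : ℚ) = n.choose k * (n + 1) / (k + 1) := by
  rw [eq_div_iff (by positivity)]
  exact_mod_cast (Nat.add_one_mul_choose_eq n k).symm.trans (Nat.mul_comm _ _)

lemma cast_choose_add_one_right (n k : ℕ) :
    (n.choose (k + 1) : ℚ) = n.choose k * (n - k : ℕ) / (k + 1) := by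
  rw [eq_div_iff (by positivity)]
  exact_mod_cast Nat.choose_succ_right_eq n k

lemma nodeCount_step (i b j : ℕ) :
    nodeCount (i + 1) (b + 1) (j + 1) - nodeCount i (b + 1) (j + 1) =
      nodeCount (i + 2) b (j + 1) - nodeCount (i + 1) b (j + 1) + nodeCount (i + 1) (b + 1) j := by
  -- every binomial is a rational multiple of `u` or `v`, which leaves an identity of fractions
  set u : ℚ := (((i + b + j + 1).choose j : ℕ) : ℚ)
  set v : ℚ := (((j + 1).multichoose b : ℕ) : ℚ)
  have hY1 : ((j + 1).multichoose (b + 1) : ℚ) = v * (j + b + 1) / (b + 1) := by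
    simp only [v, Nat.multichoose_eq, show j + 1 + (b + 1) - 1 = j + b + 1 by omega,
      show j + 1 + b - 1 = j + b by omega, cast_choose_succ_succ]
    push_cast; ring
  have hW : (j.multichoose (b + 1) : ℚ) = v * j / (b + 1) := by
    simp only [v, Nat.multichoose_eq, show j + (b + 1) - 1 = j + b by omega,
      show j + 1 + b - 1 = j + b by omega, cast_choose_add_one_right, show j + b - b = j by omega]
  have hX1 : ((i + b + j + 2).choose (j + 1) : ℚ) = u * (i + b + j + 2) / (j + 1) := by
    rw [show i + b + j + 2 = (i + b + j + 1) + 1 by omega, cast_choose_succ_succ]; push_cast; ring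
  have hX2 : ((i + b + j + 1).choose (j + 1) : ℚ) = u * (i + b + 1) / (j + 1) := by
    rw [cast_choose_add_one_right, show i + b + j + 1 - j = i + b + 1 by omega]; push_cast; ring
  rw [nodeCount_succ_right, nodeCount_succ_right, nodeCount_succ_right, nodeCount_succ_right,
    nodeCount_succ_left]
  push_cast
  simp only [show i + 1 + (b + 1) + j = i + b + j + 2 by omega,
    show i + (b + 1) + j = i + b + j + 1 by omega,
    show i + 2 + b + j = i + b + j + 2 by omega, show i + 1 + b + j = i + b + j + 1 by omega,
    hY1, hW, hX1, hX2]
  field_simp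
  ring

lemma nodeCount_zero_left (b j : ℕ) : nodeCount 0 b j = 0 := by
  simp [nodeCount]

lemma nodeCount_succ_zero_right (a b : ℕ) : nodeCount (a + 1) b 0 = if b = 0 then 1 else 0 := by
  rw [nodeCount_succ_left]
  rcases b with _ | b
  · simpa using Nat.cast_add_one_ne_zero (R := ℚ) a
  · simp

lemma nodeCount_succ_zero (a j : ℕ) : nodeCount (a + 1) 0 j = (a + j).choose j := by
  simp [nodeCount_succ_left, Nat.cast_add_one_ne_zero (R := ℚ) a]

lemma sum_nodeCount (c b j : ℕ) :
    ∑ k ∈ range (b + 1), nodeCount (c + 1 + k) (b - k) j =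
      nodeCount (c + 1) b (j + 1) - nodeCount c b (j + 1) := by
  induction b generalizing c with
  | zero =>
    rw [sum_range_one, add_zero, Nat.sub_zero]
    rcases c with _ | c
    · simp [nodeCount_zero_left, nodeCount_succ_zero]
    · rw [nodeCount_succ_zero, nodeCount_succ_zero, nodeCount_succ_zero,
        show c + 1 + (j + 1) = (c + j + 1) + 1 by omega, Nat.choose_succ_succ',
        show c + 1 + j = c + j + 1 by omega, ← add_assoc]
      push_cast
      ring
  | succ b ih =>
    rw [sum_range_succ', Finset.sum_congr rfl fun k _ => by
      rw [Nat.add_sub_add_right, show c + 1 + (k + 1) = c + 1 + 1 + k by omega], ih (c + 1),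
      add_zero, Nat.sub_zero, nodeCount_step c b j]

lemma ncard_labelSet_eq_nodeCount_zero (c b : ℕ) :
    ((labelSet (c + b) c (c + b - 1)).ncard : ℚ) = nodeCount c b 0 := by
  induction c generalizing b with
  | zero => simp [labelSet_label_zero, nodeCount_zero_left]
  | succ c ih =>
    rcases Nat.eq_zero_or_pos (c + b) with h | h
    · obtain ⟨rfl, rfl⟩ : c = 0 ∧ b = 0 := by omega
      simp [labelSet_one_one_zero, nodeCount_succ_zero_right]
    rw [show c + 1 + b - 1 = c + b by omega, show c + 1 + b = c + b + 1 by omega,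
      ncard_labelSet_succ h.ne' (by omega : c ≤ c + b),
      Finset.sum_eq_zero fun a _ => by rw [labelSet_of_length_le le_rfl, Set.ncard_empty],
      zero_add, ih b]
    rcases c with _ | c
    · simp [nodeCount_zero_left, nodeCount_succ_zero_right, show b ≠ 0 by omega]
    · simp [nodeCount_succ_zero_right]

theorem ncard_labelSet_eq_nodeCount (j c b : ℕ) :
    ((labelSet (c + b + j) c (c + b - 1)).ncard : ℚ) = nodeCount c b j := by
  induction j generalizing c b with
  | zero => exact ncard_labelSet_eq_nodeCount_zero c b
  | succ j ihj =>
    -- the ascent parent keeps the number `j + 1` of non-ascent steps, hence the induction on `c`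
    induction c generalizing b with
    | zero => simp [labelSet_label_zero, nodeCount_zero_left]
    | succ c ih =>
      have hsum : ∀ k ∈ range (b + 1),
          ((labelSet (c + b + j + 1) (c + 1 + k) (c + b)).ncard : ℚ) =
            nodeCount (c + 1 + k) (b - k) j := by
        intro k hk
        have hk := Finset.mem_range.mp hk
        have := ihj (c + 1 + k) (b - k)
        rwa [show c + 1 + k + (b - k) + j = c + b + j + 1 by omega,
          show c + 1 + k + (b - k) - 1 = c + b by omega] at this
      have hlast := ih b
      rw [show c + b + (j + 1) = c + b + j + 1 by omega] at hlast
      rw [show c + 1 + b + (j + 1) = c + b + j + 1 + 1 by omega,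
        show c + 1 + b - 1 = c + b by omega,
        ncard_labelSet_succ (by omega) (by omega : c ≤ c + b),
        ← Finset.Ico_add_one_right_eq_Icc,
        Finset.sum_Ico_eq_sum_range, show c + b + 1 + 1 - (c + 1) = b + 1 by omega]
      push_cast
      rw [Finset.sum_congr rfl hsum, hlast, sum_nodeCount]
      ring

/-- Every sequence has exactly one child of label `1`: append its smallest admissible letter. -/
lemma ncard_setOf_ascList_eq {n : ℕ} (hn : n ≠ 0) (k : ℕ) :
    {l : List ℕ | l.length = n ∧ IsAscSeq l ∧ ¬ Contains101 l ∧ ascList l = k}.ncard =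
      (labelSet (n + 1) 1 k).ncard := by
  rw [ncard_labelSet_succ hn (Nat.zero_le k), labelSet_label_zero, Set.ncard_empty, add_zero,
    ncard_eq_sum_ncard_fiber
      ((finite_setOf_length_eq n).subset fun l hl => ⟨hl.1, hl.2.1, hl.2.2.1⟩) label
      (Icc 1 (k + 1))]
  · refine Finset.sum_congr rfl fun a _ => congrArg Set.ncard ?_
    ext l
    simp only [labelSet, IsAscSeqAvoiding101, Set.mem_ofPred_eq]
    tauto
  · rintro l ⟨-, hasc, hcon, rfl⟩
    have hl : IsAscSeqAvoiding101 l := ⟨hasc, hcon⟩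
    exact Finset.mem_Icc.mpr ⟨label_pos hl, label_le_ascList_add_one hl⟩

lemma mul_ncard_labelSet_succ_one (n k : ℕ) :
    n * (labelSet (n + 1) 1 k).ncard = n.choose (k + 1) * n.choose k := by
  rcases lt_or_ge n k with h | h
  · rw [labelSet_of_length_le (by omega), Set.ncard_empty, Nat.choose_eq_zero_of_lt (by omega)]
    simp
  obtain ⟨j, rfl⟩ := Nat.exists_eq_add_of_le h
  have hcount := ncard_labelSet_eq_nodeCount j 1 k
  rw [show 1 + k + j = k + j + 1 by omega, show 1 + k - 1 = k by omega] at hcount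
  rcases j with _ | j
  · rw [add_zero] at hcount ⊢
    rcases k with _ | k
    · simp
    · rw [Nat.choose_eq_zero_of_lt (by omega), zero_mul]
      simpa [nodeCount_succ_zero_right] using hcount
  · apply Nat.cast_injective (R := ℚ)
    have hsymm : (k + (j + 1)).choose (j + 1) = (k + (j + 1)).choose k := Nat.choose_symm_add.symm
    have hpascal := Nat.add_one_mul_choose_eq (k + j) k
    rw [nodeCount_succ_left, Nat.multichoose_eq, show 0 + k + (j + 1) = k + (j + 1) by omega,
      show j + 1 + k - 1 = k + j by omega, hsymm] at hcount
    rw [show k + (j + 1) = k + j + 1 by omega] at hcount hsymm ⊢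
    have hpascal' : ((k + j + 1 : ℕ) : ℚ) * ((k + j).choose k : ℕ) =
        ((k + j + 1).choose (k + 1) : ℕ) * (k + 1 : ℕ) := by
      exact_mod_cast hpascal
    push_cast [hcount] at hpascal' ⊢
    field_simp
    linear_combination (((k + j + 1).choose k : ℕ) : ℚ) * hpascal'

lemma sum_range_choose_succ_mul_choose (n : ℕ) :
    ∑ k ∈ range n, n.choose (k + 1) * n.choose k = (2 * n).choose (n + 1) := by
  rw [two_mul, Nat.add_choose_eq, Finset.Nat.sum_antidiagonal_eq_sum_range_succ_mk,
    sum_range_succ', sum_range_succ, Nat.choose_eq_zero_of_lt (by omega : n < n + 1 - 0),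
    Nat.choose_eq_zero_of_lt (by omega : n < n + 1)]
  simp only [mul_zero, zero_mul, add_zero]
  refine (Finset.sum_congr rfl fun k hk => ?_).symm
  rw [show n + 1 - (k + 1) = n - k by omega,
    Nat.choose_symm (by simpa using (Finset.mem_range.mp hk).le)]

lemma mul_catalan_eq_choose (n : ℕ) : n * catalan n = (2 * n).choose (n + 1) := by
  have h := Nat.choose_succ_right_eq (2 * n) n
  rw [show 2 * n - n = n by omega, ← Nat.centralBinom_eq_two_mul_choose,
    ← succ_mul_catalan_eq_centralBinom] at h
  exact Nat.eq_of_mul_eq_mul_right (by omega : 0 < n + 1) (by rw [h]; ring)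

lemma ncard_setOf_eq_sum_ncard_ascList (n : ℕ) :
    {l : List ℕ | l.length = n ∧ IsAscSeq l ∧ ¬ Contains101 l}.ncard =
      ∑ k ∈ range n, {l : List ℕ | l.length = n ∧ IsAscSeq l ∧ ¬ Contains101 l ∧
        ascList l = k}.ncard := by
  rw [ncard_eq_sum_ncard_fiber (finite_setOf_length_eq n) ascList (range n)]
  · simp only [Set.sep_ofPred, and_assoc]
  · rintro l ⟨rfl, hl⟩
    exact Finset.mem_range.mpr (ascList_lt_length hl.1.1)

end AscentSequence

/-- The 101-avoiding ascent sequences of length `n` are counted by the Catalan number,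
and those with exactly `k` ascents by the Narayana number `N(n, k+1)`. -/
theorem stmt12 (n : ℕ) (hn : 1 ≤ n) :
    {l : List ℕ | l.length = n ∧ IsAscSeq l ∧ ¬ Contains101 l}.ncard = catalan n ∧
    ∀ k : ℕ,
      {l : List ℕ | l.length = n ∧ IsAscSeq l ∧ ¬ Contains101 l ∧ ascList l = k}.ncard
        = n.choose (k + 1) * n.choose k / n := by
  have hn0 : 0 < n := hn
  have hnarayana : ∀ k, n * {l : List ℕ | l.length = n ∧ IsAscSeq l ∧ ¬ Contains101 l ∧
      ascList l = k}.ncard = n.choose (k + 1) * n.choose k := fun k => by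
    rw [AscentSequence.ncard_setOf_ascList_eq hn0.ne', AscentSequence.mul_ncard_labelSet_succ_one]
  refine ⟨Nat.eq_of_mul_eq_mul_left hn0 ?_, fun k => ?_⟩
  · rw [AscentSequence.mul_catalan_eq_choose, ← AscentSequence.sum_range_choose_succ_mul_choose,
      AscentSequence.ncard_setOf_eq_sum_ncard_ascList, Finset.mul_sum]
    exact Finset.sum_congr rfl fun k _ => hnarayana k
  · rw [← hnarayana k, Nat.mul_div_cancel_left _ hn0]
end

section
/- The ascent sequences avoiding 0101 are restricted growth functions, and they encode precisely the non-crossing set partitions: an RGF encodes a non-crossing partition if and only if it avoids 0101. -/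
/-- A sequence contains the pattern 0101. -/
def Contains0101 (l : List ℕ) : Prop :=
  ∃ i j k m, i < j ∧ j < k ∧ k < m ∧ m < l.length ∧
    l.getD i 0 = l.getD k 0 ∧ l.getD j 0 = l.getD m 0 ∧ l.getD i 0 < l.getD j 0

/-- The partition encoded by an RGF (blocks are the fibers of the letters) is
non-crossing: there are no positions `a < b < c < d` with `a, c` in one block and
`b, d` in a different block. -/
def EncodesNoncrossing (l : List ℕ) : Prop :=
  ¬ ∃ a b c d, a < b ∧ b < c ∧ c < d ∧ d < l.length ∧
      l.getD a 0 = l.getD c 0 ∧ l.getD b 0 = l.getD d 0 ∧ l.getD a 0 ≠ l.getD b 0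

/-!
In an RGF every letter smaller than one already seen occurs earlier. Hence a crossing
`x y x y` with `y < x` extends, by an earlier `y`, to a 0101 pattern `y x y x`.

For the first part, let position `i` carry the first letter `k + 1` not preceded by `k` in a
0101-avoiding ascent sequence. The prefix before `i` uses only letters `< k`, yet has at least
`k` ascents. The top of each ascent is the first occurrence of its letter (an earlier copy,
preceded by an occurrence of the ascent's bottom letter, would give 0101), so these `≥ k` tops
are distinct letters in `[1, k)`, a contradiction.
-/

open Finset

lemma ascList_eq_card : ∀ l : List ℕ,
    ascList l = #{a ∈ range (l.length - 1) | l.getD a 0 < l.getD (a + 1) 0}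
  | [] => rfl
  | [_] => rfl
  | x :: y :: ys => by
      have ih := ascList_eq_card (y :: ys)
      simp only [ascList, List.zip_cons_cons, List.tail_cons, List.countP_cons] at ih ⊢
      simp only [card_filter, List.length_cons, Nat.add_sub_cancel, sum_range_succ',
        List.getD_cons_succ, List.getD_cons_zero] at ih ⊢
      rw [ih]
      simp

lemma ascList_take_eq_card (l : List ℕ) {i : ℕ} (hi : i ≤ l.length) :
    ascList (l.take i) = #{a ∈ range (i - 1) | l.getD a 0 < l.getD (a + 1) 0} := by
  rw [ascList_eq_card, List.length_take_of_le hi]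
  congr 1
  refine filter_congr fun a ha => ?_
  have ha : a + 1 < i := by rw [mem_range] at ha; omega
  simp [List.getD_eq_getElem?_getD, ha, (Nat.lt_succ_self a).trans ha]

def IsRGFBelow (l : List ℕ) (n : ℕ) : Prop :=
  ∀ i < n, ∀ k, l.getD i 0 = k + 1 → ∃ j < i, l.getD j 0 = k

lemma IsRGFBelow.exists_lt_getD_eq {l : List ℕ} {n : ℕ} (h : IsRGFBelow l n) {q w : ℕ}
    (hq : q < n) (hw : w < l.getD q 0) : ∃ e < q, l.getD e 0 = w := by
  induction hv : l.getD q 0 generalizing q with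
  | zero => omega
  | succ v ih =>
    obtain ⟨j, hjq, hj⟩ := h q hq v hv
    rcases Nat.lt_succ_iff_lt_or_eq.mp (hv ▸ hw) with hw | rfl
    · obtain ⟨e, hej, he⟩ := ih (hjq.trans hq) (hj ▸ hw) hj
      exact ⟨e, hej.trans hjq, he⟩
    · exact ⟨j, hjq, hj⟩

lemma getD_ne_ascent_top {l : List ℕ} {n p b : ℕ} (hrgf : IsRGFBelow l n)
    (hav : ¬ Contains0101 l) (hpn : p < n) (hpb : p ≤ b) (hb : b + 1 < l.length)
    (hasc : l.getD b 0 < l.getD (b + 1) 0) : l.getD p 0 ≠ l.getD (b + 1) 0 := by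
  intro htop
  obtain ⟨e, hep, he⟩ := hrgf.exists_lt_getD_eq hpn (htop ▸ hasc)
  have hpb : p < b := hpb.lt_of_ne (by rintro rfl; omega)
  exact hav ⟨e, p, b, b + 1, hep, hpb, b.lt_succ_self, hb, he, htop, he ▸ htop ▸ hasc⟩

lemma IsAscSeq.exists_lt_getD_eq_of_getD_eq_succ {l : List ℕ} (hl : IsAscSeq l)
    (hav : ¬ Contains0101 l) {i k : ℕ} (hi : i < l.length) (hrgf : IsRGFBelow l i) (hk : l.getD i 0 = k + 1) :
    ∃ j < i, l.getD j 0 = k := by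
  by_contra! hnew
  have hprefix : ∀ j < i, l.getD j 0 < k := fun j hj => by
    by_contra! hge
    obtain hgt | heq := hge.lt_or_eq
    · obtain ⟨e, hej, he⟩ := hrgf.exists_lt_getD_eq hj hgt
      exact hnew e (hej.trans hj) he
    · exact hnew j hj heq.symm
  have hi0 : 0 < i := Nat.pos_of_ne_zero fun h => by rw [h, hl.2.1] at hk; omega
  have hk0 : 0 < k := hl.2.1 ▸ hprefix 0 hi0
  have hasc := hl.2.2 i hi0 hi
  rw [hk, ascList_take_eq_card l hi.le] at hasc
  set S := {a ∈ range (i - 1) | l.getD a 0 < l.getD (a + 1) 0}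
  have hmaps : Set.MapsTo (fun a => l.getD (a + 1) 0) S (Ico 1 k) := fun a ha => by
    simp only [S, mem_coe, mem_filter, mem_range] at ha
    simp only [coe_Ico, Set.mem_Ico]
    exact ⟨by omega, hprefix (a + 1) (by omega)⟩
  have hinj : Set.InjOn (fun a => l.getD (a + 1) 0) S := fun a ha b hb hab => by
    simp only [S, mem_coe, mem_filter, mem_range] at ha hb
    by_contra hne
    rcases Nat.lt_or_gt_of_ne hne with h | h
    · exact getD_ne_ascent_top hrgf hav (p := a + 1) (by omega) h (by omega) hb.2 hab
    · exact getD_ne_ascent_top hrgf hav (p := b + 1) (by omega) h (by omega) ha.2 hab.symm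
  have hcard : #S ≤ k - 1 := by
    simpa using card_le_card_of_injOn _ hmaps hinj
  omega

lemma IsAscSeq.isRGF_of_not_contains0101 {l : List ℕ} (hl : IsAscSeq l)
    (hav : ¬ Contains0101 l) : IsRGF l := by
  refine ⟨hl.2.1, fun i => ?_⟩
  induction i using Nat.strong_induction_on with
  | _ i ih =>
    exact fun hi k hk => hl.exists_lt_getD_eq_of_getD_eq_succ hav hi
      (fun j hj => ih j hj (hj.trans hi)) hk

lemma IsRGFBelow.encodesNoncrossing_iff {l : List ℕ} (h : IsRGFBelow l l.length) :
    EncodesNoncrossing l ↔ ¬ Contains0101 l := by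
  refine ⟨fun hnc ⟨i, j, k, m, hij, hjk, hkm, hm, hik, hjm, hlt⟩ =>
    hnc ⟨i, j, k, m, hij, hjk, hkm, hm, hik, hjm, hlt.ne⟩, ?_⟩
  rintro hav ⟨a, b, c, d, hab, hbc, hcd, hd, hac, hbd, hne⟩
  rcases Nat.lt_or_gt_of_ne hne with hlt | hgt
  · exact hav ⟨a, b, c, d, hab, hbc, hcd, hd, hac, hbd, hlt⟩
  · obtain ⟨e, hea, he⟩ := h.exists_lt_getD_eq (by omega) hgt
    exact hav ⟨e, a, b, c, hea, hab, hbc, by omega, he, hac, he ▸ hgt⟩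

/-- Ascent sequences avoiding 0101 are RGFs, and an RGF encodes a non-crossing set
partition if and only if it avoids 0101. -/
theorem stmt14 :
    (∀ l : List ℕ, IsAscSeq l → ¬ Contains0101 l → IsRGF l) ∧
    (∀ l : List ℕ, IsRGF l → (¬ Contains0101 l ↔ EncodesNoncrossing l)) :=
  ⟨fun _ hl hav => hl.isRGF_of_not_contains0101 hav,
    fun _ hl => (IsRGFBelow.encodesNoncrossing_iff hl.2).symm⟩
end
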